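/- arXiv:1810.02946 — 2 statements merged into one kernel-verified Lean document; each statement's English description precedes it below -/
import Mathlib

section
/- For λ > 0 define A_0(λ) = 2λ²·log(2λ) − 3λ², A_1(λ) = −(1/12)·log λ, and A_g(λ) = (B_{2g}/(2g(2g−2)))·(2λ)^{2−2g} for g ≥ 2. Then for every integer n ≥ 1 and every λ > 0, Σ_{k=1}^{n} (2/(2k)!) · A_{n−k}^{(2k)}(λ) = 4·log(2λ) if n = 1, and = −(1/(n−1))·(2λ)^{2−2n} if n ≥ 2. (That is, the formal series F(λ;ℏ) = Σ_{g≥0} ℏ^{2g−2} A_g(λ) solves F(λ+ℏ) − 2F(λ) + F(λ−ℏ) = 2·log(2λ) + log(2λ+ℏ) + log(2λ−ℏ) order by order in ℏ, using the expansion log(2λ+ℏ) + log(2λ−ℏ) = 2·log(2λ) − Σ_{m≥1} (1/m)(ℏ/(2λ))^{2m}.) -/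
/-!
Writing `A_g(λ) = a_g(2λ)`, where `a_0'' = log`, `a_1' = -1/(12u)` and `a_g` (`g ≥ 2`) is a negative
power, gives for `g + k = n ≥ 2`, uniformly in `g`,
`A_g^{(2k)}(λ) = 4^k (2g-1) B_{2g}/(2g)! · (2n-3)! · (2λ)^{2-2n}` (for `g = 0, 1` this is where
`B_0 = 1`, `B_2 = 1/6` enter). The sum therefore collapses to
`2 (2n-3)!/(2n)! · Σ_{g<n} (2g-1) C(2n,2g) B_{2g} 2^{2n-2g} · (2λ)^{2-2n}`. The odd-index terms
`(k-1) C(2n,k) B_k 2^{2n-k}` vanish, so this is the full sum over `k < 2n`, and splitting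
`k - 1 = (2n-1) - (2n-k)` turns it into values of Bernoulli polynomials at `2`, where
`B_m(2) = B_m(1) + m` gives `-2n(2n-1)`.
-/

open Finset Filter Topology Real
open scoped Nat

section IteratedDeriv

variable {𝕜 : Type*} [NontriviallyNormedField 𝕜] {F : Type*} [NormedAddCommGroup F]
  [NormedSpace 𝕜 F]

theorem iteratedDeriv_succ_eq_of_hasDerivAt {f f' : 𝕜 → F} {s : Set 𝕜} (hs : IsOpen s)
    (hf : ∀ y ∈ s, HasDerivAt f (f' y) y) (m : ℕ) {x : 𝕜} (hx : x ∈ s) :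
    iteratedDeriv (m + 1) f x = iteratedDeriv m f' x := by
  rw [iteratedDeriv_succ']
  refine Filter.EventuallyEq.iteratedDeriv_eq m ?_
  filter_upwards [hs.mem_nhds hx] with y hy using (hf y hy).deriv

theorem iteratedDeriv_comp_const_mul_field (f : 𝕜 → 𝕜) (c : 𝕜) (m : ℕ) :
    iteratedDeriv m (fun y => f (c * y)) = fun x => c ^ m * iteratedDeriv m f (c * x) := by
  induction m with
  | zero => simp
  | succ m ih =>
    funext x
    rw [iteratedDeriv_succ, ih]
    simp only [deriv_const_mul_field', deriv_comp_mul_left, iteratedDeriv_succ, smul_eq_mul]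
    ring

theorem iteratedDeriv_zpow_neg_sub_one (a m : ℕ) (x : 𝕜) :
    iteratedDeriv m (fun y => y ^ (-(a : ℤ) - 1)) x
      = (-1) ^ m * (a + 1).ascFactorial m * x ^ (-(a : ℤ) - 1 - m) := by
  rw [iteratedDeriv_eq_iterate, iter_deriv_zpow, Nat.ascFactorial_eq_prod_range, Nat.cast_prod]
  have hfactor : ∀ i ∈ range m, (((-(a : ℤ) - 1 : ℤ) : 𝕜) - i) = -1 * ((a + 1 + i : ℕ) : 𝕜) :=
    fun i _ => by push_cast; ring
  rw [prod_congr rfl hfactor, prod_mul_distrib, prod_const, card_range]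

end IteratedDeriv

theorem Polynomial.bernoulli_eval_eq_sum (N : ℕ) (x : ℚ) :
    (bernoulli N).eval x = ∑ k ∈ range (N + 1), _root_.bernoulli k * N.choose k * x ^ (N - k) := by
  simp [bernoulli, eval_finsetSum]

theorem Polynomial.bernoulli_eval_two (N : ℕ) : (bernoulli N).eval 2 = bernoulli' N + N := by
  rw [show (2 : ℚ) = 1 + 1 by norm_num, bernoulli_eval_one_add, bernoulli_eval_one, one_pow,
    mul_one]

theorem sum_sub_mul_bernoulli_mul_choose_mul_pow (N : ℕ) (x : ℚ) :
    ∑ k ∈ range (N + 2), ((N + 1 - k : ℕ) : ℚ) * (bernoulli k * (N + 1).choose k * x ^ (N + 1 - k))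
      = (N + 1) * x * (Polynomial.bernoulli N).eval x := by
  rw [sum_range_succ, Nat.sub_self, Nat.cast_zero, zero_mul, add_zero,
    Polynomial.bernoulli_eval_eq_sum, mul_sum]
  refine sum_congr rfl fun k hk => ?_
  have hchoose : (N.choose k : ℚ) * (N + 1) = (N + 1).choose k * ((N + 1 - k : ℕ) : ℚ) := by
    exact_mod_cast Nat.choose_mul_succ_eq N k
  rw [show N + 1 - k = (N - k) + 1 by have := mem_range.mp hk; omega, pow_succ] at *
  linear_combination (-(bernoulli k * x ^ (N - k) * x)) * hchoose

theorem Finset.sum_range_two_mul {M : Type*} [AddCommMonoid M] (f : ℕ → M) (n : ℕ) :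
    ∑ k ∈ range (2 * n), f k = ∑ g ∈ range n, (f (2 * g) + f (2 * g + 1)) := by
  induction n with
  | zero => simp
  | succ n ih => rw [Nat.mul_succ, sum_range_succ, sum_range_succ, ih, sum_range_succ, add_assoc]

theorem Finset.sum_Icc_one_sub_eq_sum_range {M : Type*} [AddCommMonoid M] (f : ℕ → ℕ → M)
    (n : ℕ) : ∑ k ∈ Icc 1 n, f (n - k) k = ∑ g ∈ range n, f g (n - g) := by
  refine sum_nbij' (fun k => n - k) (fun g => n - g) ?_ ?_ ?_ ?_ ?_ <;>
    intro k hk <;> simp only [mem_Icc, mem_range] at hk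
  · simp only [mem_range]; omega
  · simp only [mem_Icc]; omega
  · omega
  · omega
  · rw [Nat.sub_sub_self hk.2]

theorem sum_two_mul_sub_one_mul_bernoulli_mul_choose (n : ℕ) (hn : 2 ≤ n) :
    ∑ g ∈ range n,
        (2 * g - 1 : ℚ) * (bernoulli (2 * g) * (2 * n).choose (2 * g) * 2 ^ (2 * n - 2 * g))
      = -(2 * n * (2 * n - 1)) := by
  obtain ⟨N, hN⟩ : ∃ N, 2 * n = N + 1 := ⟨2 * n - 1, by omega⟩
  have hN' : (N : ℚ) = 2 * n - 1 := by
    rw [eq_sub_iff_add_eq]; exact_mod_cast hN.symm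
  let T : ℕ → ℚ := fun k => bernoulli k * (2 * n).choose k * 2 ^ (2 * n - k)
  have hshift : ∑ k ∈ range (2 * n + 1), ((2 * n - k : ℕ) : ℚ) * T k
      = 2 * n * 2 * (bernoulli' N + N) := by
    simp only [T, hN]
    rw [sum_sub_mul_bernoulli_mul_choose_mul_pow, Polynomial.bernoulli_eval_two, hN']
    ring
  have hfull : ∑ k ∈ range (2 * n + 1), ((k : ℚ) - 1) * T k
      = (2 * n - 1) * (Polynomial.bernoulli (2 * n)).eval 2 - 2 * n * 2 * (bernoulli' N + N) := by
    have hsplit : ∀ k ∈ range (2 * n + 1),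
        ((k : ℚ) - 1) * T k = (2 * n - 1) * T k - ((2 * n - k : ℕ) : ℚ) * T k := by
      intro k hk
      rw [Nat.cast_sub (Nat.lt_succ_iff.mp (mem_range.mp hk))]
      push_cast
      ring
    rw [sum_congr rfl hsplit, sum_sub_distrib, ← mul_sum, hshift, Polynomial.bernoulli_eval_eq_sum]
  have hodd : bernoulli' N = 0 := bernoulli'_eq_zero_of_odd ⟨n - 1, by omega⟩ (by omega)
  have heven : bernoulli' (2 * n) = bernoulli (2 * n) :=
    (bernoulli_eq_bernoulli'_of_ne_one (by omega)).symm
  have hodd_terms : ∀ g ∈ range n, (((2 * g + 1 : ℕ) : ℚ) - 1) * T (2 * g + 1) = 0 := by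
    intro g _
    rcases Nat.eq_zero_or_pos g with rfl | hg
    · simp
    · simp [T, bernoulli_eq_bernoulli'_of_ne_one (show 2 * g + 1 ≠ 1 by omega),
        bernoulli'_eq_zero_of_odd (odd_two_mul_add_one g) (by omega)]
  rw [sum_range_succ, sum_range_two_mul, sum_add_distrib, sum_eq_zero hodd_terms, add_zero,
    Polynomial.bernoulli_eval_two, hodd, heven, hN'] at hfull
  simp only [T, Nat.sub_self, pow_zero, Nat.choose_self] at hfull
  push_cast at hfull
  linear_combination hfull

theorem Real.iteratedDeriv_succ_log (m : ℕ) (x : ℝ) :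
    iteratedDeriv (m + 1) Real.log x = (-1) ^ m * m ! * x ^ (-1 - m : ℤ) := by
  rw [iteratedDeriv_succ', Real.deriv_log', iteratedDeriv_eq_iterate, iter_deriv_inv]

theorem iteratedDeriv_eq_of_forall_pos_eq_comp_const_mul {f p : ℝ → ℝ} {c l : ℝ}
    (h : ∀ x, 0 < x → f x = p (c * x)) (hl : 0 < l) (m : ℕ) :
    iteratedDeriv m f l = c ^ m * iteratedDeriv m p (c * l) := by
  have heq : f =ᶠ[𝓝 l] fun x => p (c * x) := by
    filter_upwards [Ioi_mem_nhds hl] with x hx using h x hx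
  rw [heq.iteratedDeriv_eq, iteratedDeriv_comp_const_mul_field]

theorem iteratedDeriv_add_two_of_eq_sq_mul_log {f : ℝ → ℝ}
    (hf : ∀ x, 0 < x → f x = 2 * x ^ 2 * log (2 * x) - 3 * x ^ 2) {l : ℝ} (hl : 0 < l) (m : ℕ) :
    iteratedDeriv (m + 2) f l = 2 ^ (m + 2) * iteratedDeriv m log (2 * l) := by
  have hp' : ∀ u ∈ Set.Ioi (0 : ℝ),
      HasDerivAt (fun u => u ^ 2 / 2 * log u - 3 / 4 * u ^ 2) (u * log u - u) u := by
    intro u (hu : 0 < u)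
    refine ((((hasDerivAt_pow 2 u).div_const 2).fun_mul (hasDerivAt_log hu.ne')).sub
      ((hasDerivAt_pow 2 u).const_mul (3 / 4))).congr_deriv ?_
    field_simp
    ring
  have hp'' : ∀ u ∈ Set.Ioi (0 : ℝ), HasDerivAt (fun u => u * log u - u) (log u) u := by
    intro u (hu : 0 < u)
    refine (((hasDerivAt_id u).fun_mul (hasDerivAt_log hu.ne')).sub
      (hasDerivAt_id u)).congr_deriv ?_
    simp [hu.ne']
  have h2l : 2 * l ∈ Set.Ioi (0 : ℝ) := by simp [hl]
  rw [iteratedDeriv_eq_of_forall_pos_eq_comp_const_mul (c := 2)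
      (p := fun u => u ^ 2 / 2 * log u - 3 / 4 * u ^ 2) (fun x hx => by rw [hf x hx]; ring) hl,
    iteratedDeriv_succ_eq_of_hasDerivAt isOpen_Ioi hp' _ h2l,
    iteratedDeriv_succ_eq_of_hasDerivAt isOpen_Ioi hp'' _ h2l]

theorem iteratedDeriv_succ_of_eq_const_mul_log {f : ℝ → ℝ} {c : ℝ}
    (hf : ∀ x, 0 < x → f x = c * log x) {l : ℝ} (hl : 0 < l) (m : ℕ) :
    iteratedDeriv (m + 1) f l = 2 ^ (m + 1) * (c * iteratedDeriv (m + 1) log (2 * l)) := by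
  rw [iteratedDeriv_eq_of_forall_pos_eq_comp_const_mul (c := 2)
      (p := fun u => c * (log u - log 2))
      (fun x hx => by rw [hf x hx, log_mul two_ne_zero hx.ne']; ring) hl,
    iteratedDeriv_const_mul_field, iteratedDeriv_succ', iteratedDeriv_succ' (f := log),
    deriv_sub_const_fun]

theorem iteratedDeriv_of_eq_const_mul_zpow {f : ℝ → ℝ} {c : ℝ} {a : ℕ}
    (hf : ∀ x, 0 < x → f x = c * (2 * x) ^ (-(a : ℤ) - 1)) {l : ℝ} (hl : 0 < l) (m : ℕ) :
    iteratedDeriv m f l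
      = 2 ^ m * (c * ((-1) ^ m * (a + 1).ascFactorial m * (2 * l) ^ (-(a : ℤ) - 1 - m))) := by
  rw [iteratedDeriv_eq_of_forall_pos_eq_comp_const_mul (c := 2)
      (p := fun u => c * u ^ (-(a : ℤ) - 1)) hf hl,
    iteratedDeriv_const_mul_field, iteratedDeriv_zpow_neg_sub_one]

theorem iteratedDeriv_two_mul_eq_bernoulli {A : ℕ → ℝ → ℝ}
    (hA0 : ∀ l : ℝ, 0 < l → A 0 l = 2 * l ^ 2 * Real.log (2 * l) - 3 * l ^ 2)
    (hA1 : ∀ l : ℝ, 0 < l → A 1 l = -(1 / 12) * Real.log l)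
    (hAg : ∀ g : ℕ, 2 ≤ g → ∀ l : ℝ, 0 < l →
      A g l = (bernoulli (2 * g) : ℝ) / (2 * (g : ℝ) * (2 * (g : ℝ) - 2))
                * (2 * l) ^ (2 - 2 * (g : ℤ)))
    {g k : ℕ} (hgk : 2 ≤ g + k) {l : ℝ} (hl : 0 < l) :
    iteratedDeriv (2 * k) (A g) l
      = 2 ^ (2 * k) * ((2 * g - 1) * bernoulli (2 * g) / (2 * g)!) * (2 * (g + k) - 3)!
          * (2 * l) ^ (2 - 2 * ((g + k : ℕ) : ℤ)) := by
  rcases g with _ | _ | g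
  · obtain ⟨j, rfl⟩ : ∃ j, k = j + 2 := ⟨k - 2, by omega⟩
    have h : iteratedDeriv ((2 * j + 1) + 1 + 2) (A 0) l
        = 2 ^ ((2 * j + 1) + 1 + 2) * ((-1) ^ (2 * j + 1) * (2 * j + 1)!
            * (2 * l) ^ (-1 - ((2 * j + 1 : ℕ) : ℤ))) := by
      rw [iteratedDeriv_add_two_of_eq_sq_mul_log hA0 hl, Real.iteratedDeriv_succ_log]
    rw [show 2 * (j + 2) = (2 * j + 1) + 1 + 2 by ring, h,
      show 2 * (0 + (j + 2)) - 3 = 2 * j + 1 by omega,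
      show (-1 - ((2 * j + 1 : ℕ) : ℤ)) = 2 - 2 * ((0 + (j + 2) : ℕ) : ℤ) by push_cast; ring]
    simp [(odd_two_mul_add_one j).neg_one_pow]
    ring
  · obtain ⟨j, rfl⟩ : ∃ j, k = j + 1 := ⟨k - 1, by omega⟩
    have h : iteratedDeriv ((2 * j + 1) + 1) (A 1) l
        = 2 ^ ((2 * j + 1) + 1) * (-(1 / 12) * ((-1) ^ (2 * j + 1) * (2 * j + 1)!
            * (2 * l) ^ (-1 - ((2 * j + 1 : ℕ) : ℤ)))) := by
      rw [iteratedDeriv_succ_of_eq_const_mul_log hA1 hl, Real.iteratedDeriv_succ_log]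
    rw [show 2 * (j + 1) = (2 * j + 1) + 1 by ring, h,
      show 2 * (0 + 1 + (j + 1)) - 3 = 2 * j + 1 by omega,
      show (-1 - ((2 * j + 1 : ℕ) : ℤ)) = 2 - 2 * ((0 + 1 + (j + 1) : ℕ) : ℤ) by push_cast; ring]
    simp [(odd_two_mul_add_one j).neg_one_pow, bernoulli_two]
    ring
  · have hf : ∀ x, 0 < x → A (g + 2) x = (bernoulli (2 * (g + 2)) : ℝ)
        / (2 * ((g + 2 : ℕ) : ℝ) * (2 * ((g + 2 : ℕ) : ℝ) - 2))
        * (2 * x) ^ (-((2 * g + 1 : ℕ) : ℤ) - 1) := by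
      intro x hx
      rw [hAg (g + 2) le_add_self x hx]
      congr 2
    rw [iteratedDeriv_of_eq_const_mul_zpow hf hl,
      show 2 * (g + 2 + k) - 3 = 2 * g + 1 + 2 * k by omega,
      ← Nat.factorial_mul_ascFactorial,
      show 2 * (g + 2) = (2 * g + 1) + 1 + 1 + 1 by ring,
      show -((2 * g + 1 : ℕ) : ℤ) - 1 - ((2 * k : ℕ) : ℤ) = 2 - 2 * ((g + 1 + 1 + k : ℕ) : ℤ) by
        push_cast; ring,
      (even_two_mul k).neg_one_pow]
    push_cast [Nat.factorial_succ]
    rw [show 2 * ((g : ℝ) + 2) - 2 = 2 * (g + 1) by ring]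
    field_simp
    ring

/-- The formal series `F(λ;ℏ) = Σ_{g≥0} ℏ^{2g−2} A_g(λ)` with
`A_0 = 2λ²log(2λ) − 3λ²`, `A_1 = −(1/12)log λ`,
`A_g = (B_{2g}/(2g(2g−2)))(2λ)^{2−2g}` (g ≥ 2) solves
`F(λ+ℏ) − 2F(λ) + F(λ−ℏ) = 2log(2λ) + log(2λ+ℏ) + log(2λ−ℏ)` order by order in `ℏ`. -/
theorem stmt3 (A : ℕ → ℝ → ℝ)
    (hA0 : ∀ l : ℝ, 0 < l → A 0 l = 2 * l ^ 2 * Real.log (2 * l) - 3 * l ^ 2)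
    (hA1 : ∀ l : ℝ, 0 < l → A 1 l = -(1 / 12) * Real.log l)
    (hAg : ∀ g : ℕ, 2 ≤ g → ∀ l : ℝ, 0 < l →
      A g l = (bernoulli (2 * g) : ℝ) / (2 * (g : ℝ) * (2 * (g : ℝ) - 2))
                * (2 * l) ^ (2 - 2 * (g : ℤ)))
    (n : ℕ) (hn : 1 ≤ n) (l : ℝ) (hl : 0 < l) :
    ∑ k ∈ Finset.Icc 1 n,
        2 / (Nat.factorial (2 * k) : ℝ) * iteratedDeriv (2 * k) (A (n - k)) l
      = if n = 1 then 4 * Real.log (2 * l)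
        else -(1 / ((n : ℝ) - 1)) * (2 * l) ^ (2 - 2 * (n : ℤ)) := by
  rcases hn.eq_or_lt with rfl | hn2
  · rw [if_pos rfl, Icc_self, sum_singleton, Nat.sub_self,
      iteratedDeriv_add_two_of_eq_sq_mul_log (m := 0) hA0 hl, iteratedDeriv_zero]
    norm_num [Nat.factorial]
  rw [if_neg hn2.ne']
  calc ∑ k ∈ Icc 1 n, 2 / ((2 * k)! : ℝ) * iteratedDeriv (2 * k) (A (n - k)) l
      = ∑ g ∈ range n, 2 / ((2 * (n - g))! : ℝ) * iteratedDeriv (2 * (n - g)) (A g) l :=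
        sum_Icc_one_sub_eq_sum_range
          (fun g k => 2 / ((2 * k)! : ℝ) * iteratedDeriv (2 * k) (A g) l) n
    _ = 2 * (2 * n - 3)! / (2 * n)! * ((∑ g ∈ range n, (2 * g - 1 : ℚ) *
          (bernoulli (2 * g) * (2 * n).choose (2 * g) * 2 ^ (2 * n - 2 * g)) : ℚ) : ℝ)
          * (2 * l) ^ (2 - 2 * (n : ℤ)) := by
        push_cast
        rw [mul_sum, sum_mul]
        refine sum_congr rfl fun g hg => ?_
        have hgn : g < n := mem_range.mp hg
        rw [iteratedDeriv_two_mul_eq_bernoulli hA0 hA1 hAg (by omega) hl,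
          Nat.add_sub_cancel' hgn.le, Nat.cast_choose ℝ (by omega : 2 * g ≤ 2 * n),
          show 2 * n - 2 * g = 2 * (n - g) by omega]
        field_simp
    _ = -(1 / ((n : ℝ) - 1)) * (2 * l) ^ (2 - 2 * (n : ℤ)) := by
        rw [sum_two_mul_sub_one_mul_bernoulli_mul_choose n hn2]
        obtain ⟨m, rfl⟩ : ∃ m, n = m + 2 := ⟨n - 2, by omega⟩
        rw [show 2 * (m + 2) - 3 = 2 * m + 1 by omega,
          show 2 * (m + 2) = (2 * m + 1) + 1 + 1 + 1 by ring]
        push_cast [Nat.factorial_succ]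
        rw [show (m : ℝ) + 2 - 1 = m + 1 by ring]
        field_simp
        ring
end

section
/- Let t, μ ∈ ℝ and consider λ ∈ ℝ with λ + μ > 0. Define V_{−1}(λ) = (λ+μ)·log(λ+μ) − (λ+μ), V_0(λ) = −(t/2)·log(λ+μ), and V_m(λ) = (B_{m+1}((t+1)/2)/(m(m+1)))·(λ+μ)^{−m} for m ≥ 1. Then for every integer n ≥ 0 and every λ with λ+μ > 0, Σ_{k=1}^{n+1} (1/k!) · V_{n−k}^{(k)}(λ) = (((1−t)/2)^n / n!) · L^{(n)}(λ), where L(λ) = log(λ+μ). (That is, the formal series V(λ;ℏ) = Σ_{m≥−1} ℏ^m V_m(λ) solves (e^{ℏ ∂_λ} − 1) V(λ) = e^{(1−t)ℏ∂_λ/2} log(λ+μ) order by order in ℏ.) -/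
/-!
On `λ + μ > 0` every coefficient is a multiple of a derivative of `L = log (· + μ)`: with
`s = (t + 1) / 2`, `V_{j-1} = (-1)^j B_j(s) / j! · L^{(j-1)}` for all `j ≥ 0`, reading `L^{(-1)}` as
the antiderivative `V_{-1}`. For `j = 1` this is `B_1(s) = t / 2`, for `j ≥ 2` it is
`L^{(m)} = (-1)^{m-1} (m-1)! (λ + μ)^{-m}`. Hence the `ℏ^n` coefficient of `(e^{ℏ∂} - 1) V` is
`L^{(n)} / (n+1)!` times `Σ_{j ≤ n} (-1)^j C(n+1, j) B_j(s) = Σ_{j ≤ n} C(n+1, j) B_j(1 - s)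
= (n + 1)(1 - s)^n`, by the reflection `B_j(1 - x) = (-1)^j B_j(x)`, and `1 - s = (1 - t) / 2`.
-/

open Polynomial Finset Nat

theorem sum_neg_one_pow_mul_choose_mul_aeval_bernoulli {A : Type*} [CommRing A] [Algebra ℚ A]
    (s : A) (n : ℕ) :
    ∑ j ∈ range (n + 1), (-1 : A) ^ j * (n + 1).choose j * aeval s (bernoulli j)
      = (n + 1) * (1 - s) ^ n := by
  have h := congrArg (aeval (1 - s)) (sum_bernoulli n)
  have hrefl (j : ℕ) : aeval (1 - s) (bernoulli j) = (-1) ^ j * aeval s (bernoulli j) := by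
    simpa [aeval_comp] using congrArg (aeval s) (bernoulli_comp_one_sub_X j)
  simp only [map_sum, map_smul, hrefl, aeval_monomial] at h
  simpa [Algebra.smul_def, mul_left_comm, mul_assoc] using h

theorem iteratedDeriv_iteratedDeriv {𝕜 F : Type*} [NontriviallyNormedField 𝕜]
    [NormedAddCommGroup F] [NormedSpace 𝕜 F] (f : 𝕜 → F) (m k : ℕ) :
    iteratedDeriv k (iteratedDeriv m f) = iteratedDeriv (k + m) f := by
  simp only [iteratedDeriv_eq_iterate, Function.iterate_add_apply]

theorem iteratedDeriv_succ_log_comp_add_const (μ : ℝ) (m : ℕ) (x : ℝ) :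
    iteratedDeriv (m + 1) (fun y => Real.log (y + μ)) x
      = (-1) ^ m * m ! * (x + μ) ^ (-(m : ℤ) - 1) := by
  have hprod : ∏ i ∈ range m, ((-1 : ℤ) - i : ℝ) = (-1) ^ m * m ! := by
    induction m with
    | zero => simp
    | succ m ih => rw [prod_range_succ, ih, factorial_succ]; push_cast; ring
  have hinv : (Inv.inv : ℝ → ℝ) = fun y => y ^ (-1 : ℤ) := funext fun y => (zpow_neg_one y).symm
  rw [iteratedDeriv_comp_add_const, iteratedDeriv_succ', Real.deriv_log', hinv,
    iteratedDeriv_eq_iterate]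
  beta_reduce
  rw [iter_deriv_zpow, hprod, neg_sub_comm]

open Filter Topology

section ShiftedLog

variable {μ : ℝ} {f g : ℝ → ℝ} {x : ℝ}

theorem eventuallyEq_of_forall_add_pos (h : ∀ y, 0 < y + μ → f y = g y) (hx : 0 < x + μ) :
    f =ᶠ[𝓝 x] g :=
  eventuallyEq_of_mem ((isOpen_lt continuous_const (continuous_add_const μ)).mem_nhds hx) h

theorem iteratedDeriv_eq_const_mul_of_forall_add_pos {c : ℝ}
    (h : ∀ y, 0 < y + μ → f y = c * g y) (hx : 0 < x + μ) (k : ℕ) :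
    iteratedDeriv k f x = c * iteratedDeriv k g x := by
  rw [(eventuallyEq_of_forall_add_pos h hx).iteratedDeriv_eq, iteratedDeriv_const_mul_field]

theorem iteratedDeriv_succ_antideriv_log_comp_add_const
    (h : ∀ y, 0 < y + μ → f y = (y + μ) * Real.log (y + μ) - (y + μ)) (hx : 0 < x + μ) (k : ℕ) :
    iteratedDeriv (k + 1) f x = iteratedDeriv k (fun y => Real.log (y + μ)) x := by
  rw [iteratedDeriv_succ']
  refine (eventuallyEq_of_forall_add_pos (fun y hy => ?_) hx).iteratedDeriv_eq k
  have hlin : HasDerivAt (fun y => y + μ) 1 y := (hasDerivAt_id y).add_const μ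
  have hF := (hlin.fun_mul (hlin.log hy.ne')).fun_sub hlin
  rw [(eventuallyEq_of_forall_add_pos h hy).deriv_eq, hF.deriv]
  field_simp
  ring

end ShiftedLog

theorem iteratedDeriv_eq_bernoulli_mul_iteratedDeriv_log {t μ : ℝ} {V : ℤ → ℝ → ℝ}
    (hVneg : ∀ l : ℝ, 0 < l + μ → V (-1) l = (l + μ) * Real.log (l + μ) - (l + μ))
    (hV0 : ∀ l : ℝ, 0 < l + μ → V 0 l = -(t / 2) * Real.log (l + μ))
    (hVm : ∀ m : ℕ, 1 ≤ m → ∀ l : ℝ, 0 < l + μ →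
      V (m : ℤ) l = aeval ((t + 1) / 2) (bernoulli (m + 1))
          / ((m : ℝ) * ((m : ℝ) + 1)) * (l + μ) ^ (-(m : ℤ)))
    {j k : ℕ} (hjk : 1 ≤ j + k) {x : ℝ} (hx : 0 < x + μ) :
    iteratedDeriv k (V (j - 1)) x
      = (-1) ^ j * aeval ((t + 1) / 2) (bernoulli j) / j !
        * iteratedDeriv (j + k - 1) (fun y => Real.log (y + μ)) x := by
  match j, k, hjk with
  | 0, k + 1, _ =>
    simpa using iteratedDeriv_succ_antideriv_log_comp_add_const hVneg hx k
  | 1, k, _ =>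
    simp only [Nat.cast_one, sub_self, add_tsub_cancel_left]
    have hB1 : aeval ((t + 1) / 2) (bernoulli 1) = t / 2 := by
      simp [Polynomial.bernoulli_one]
      ring
    rw [iteratedDeriv_eq_const_mul_of_forall_add_pos hV0 hx, hB1]
    simp
  | m + 2, k, _ =>
    have hV : ∀ y, 0 < y + μ → V ((m + 1 : ℕ) : ℤ) y
        = (-1) ^ (m + 2) * aeval ((t + 1) / 2) (bernoulli (m + 2)) / (m + 2)!
          * iteratedDeriv (m + 1) (fun y => Real.log (y + μ)) y := by
      intro y hy
      rw [hVm (m + 1) (by omega) y hy, iteratedDeriv_succ_log_comp_add_const,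
        show -((m + 1 : ℕ) : ℤ) = -(m : ℤ) - 1 by push_cast; ring, factorial_succ, factorial_succ]
      push_cast
      field_simp
      rw [mul_assoc, ← pow_add, show m + 2 + m = 2 * (m + 1) by ring, pow_mul]
      norm_num
    rw [show ((m + 2 : ℕ) : ℤ) - 1 = ((m + 1 : ℕ) : ℤ) by push_cast; ring,
      iteratedDeriv_eq_const_mul_of_forall_add_pos hV hx, iteratedDeriv_iteratedDeriv,
      show m + 2 + k - 1 = k + (m + 1) by omega]

/-- The formal series `V(λ;ℏ) = Σ_{m≥−1} ℏ^m V_m(λ)` with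
`V_{−1} = (λ+μ)log(λ+μ) − (λ+μ)`, `V_0 = −(t/2)log(λ+μ)`,
`V_m = (B_{m+1}((t+1)/2)/(m(m+1)))(λ+μ)^{−m}` (m ≥ 1) solves
`(e^{ℏ∂_λ} − 1)V = e^{(1−t)ℏ∂_λ/2} log(λ+μ)` order by order in `ℏ`. -/
theorem stmt4 (t μ : ℝ) (V : ℤ → ℝ → ℝ)
    (hVneg : ∀ l : ℝ, 0 < l + μ →
      V (-1) l = (l + μ) * Real.log (l + μ) - (l + μ))
    (hV0 : ∀ l : ℝ, 0 < l + μ → V 0 l = -(t / 2) * Real.log (l + μ))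
    (hVm : ∀ m : ℕ, 1 ≤ m → ∀ l : ℝ, 0 < l + μ →
      V (m : ℤ) l = Polynomial.aeval ((t + 1) / 2) (Polynomial.bernoulli (m + 1))
          / ((m : ℝ) * ((m : ℝ) + 1)) * (l + μ) ^ (-(m : ℤ)))
    (n : ℕ) (l : ℝ) (hl : 0 < l + μ) :
    ∑ k ∈ Finset.Icc 1 (n + 1),
        1 / (Nat.factorial k : ℝ) * iteratedDeriv k (V ((n : ℤ) - (k : ℤ))) l
      = ((1 - t) / 2) ^ n / (Nat.factorial n : ℝ)
          * iteratedDeriv n (fun x => Real.log (x + μ)) l := by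
  set b : ℕ → ℝ := fun j => (-1) ^ j * (n + 1).choose j * aeval ((t + 1) / 2) (bernoulli j)
  have hterm : ∀ k ∈ Icc 1 (n + 1),
      1 / (k ! : ℝ) * iteratedDeriv k (V ((n : ℤ) - (k : ℤ))) l
        = b (n + 1 - k) * (iteratedDeriv n (fun x => Real.log (x + μ)) l / (n + 1)!) := by
    intro k hk
    obtain ⟨hk1, hkn⟩ := mem_Icc.mp hk
    rw [show (n : ℤ) - k = ((n + 1 - k : ℕ) : ℤ) - 1 by omega,
      iteratedDeriv_eq_bernoulli_mul_iteratedDeriv_log hVneg hV0 hVm (by omega) hl,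
      show n + 1 - k + k - 1 = n by omega]
    simp only [b]
    rw [Nat.choose_symm hkn, Nat.cast_choose ℝ hkn]
    field_simp
  rw [sum_congr rfl hterm, ← sum_mul, ← Ico_add_one_right_eq_Icc, sum_Ico_reflect _ _ le_rfl,
    Nat.sub_self, Nat.add_sub_cancel, ← range_eq_Ico,
    sum_neg_one_pow_mul_choose_mul_aeval_bernoulli, factorial_succ]
  push_cast
  field_simp
  ring
end
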